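/- The function φ(ξ) = (3√2/2)·tanh((√2/3)·ξ) satisfies φ‴(ξ) + φ(ξ)·φ″(ξ) + ((2φ(ξ)² + 3φ′(ξ) + 1)/9)·φ′(ξ) = 0 for all ξ ∈ ℝ, and the function φ(ξ) = (3√2/2)·coth((√2/3)·ξ) satisfies the same equation for all ξ ≠ 0. -/

import Mathlib

/-!
Both curvatures are of the form `φ(ξ) = a·y(cξ)` with `y' = 1 - y²` (`y = tanh` or `y = coth`), and
`a = 3√2/2`, `c = √2/3` turn this into the Riccati equation `φ' = 1 - (2/9)φ²`. Differentiating it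
expresses `φ''` and `φ'''` as polynomials in `φ`, and for every solution of `φ' = ε - (2/9)φ²` the
extremal operator reduces identically to zero.
-/

/-- The fully affine extremal (Euler–Lagrange) operator with parameter `ε`:
`φ‴ + φ·φ″ + ((2φ² + 3φ′ + ε)/9)·φ′`. -/
noncomputable def extremalOp (ε : ℝ) (φ : ℝ → ℝ) (ξ : ℝ) : ℝ :=
  iteratedDeriv 3 φ ξ + φ ξ * iteratedDeriv 2 φ ξ
    + ((2 * (φ ξ) ^ 2 + 3 * deriv φ ξ + ε) / 9) * deriv φ ξ

namespace Riccati

variable {φ : ℝ → ℝ} {U : Set ℝ} {p q : ℝ}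

theorem deriv_eqOn (hφ : ∀ x ∈ U, HasDerivAt φ (p - q * φ x ^ 2) x) :
    Set.EqOn (deriv φ) (fun x => p - q * φ x ^ 2) U :=
  fun x hx => (hφ x hx).deriv

theorem iteratedDeriv_two_eqOn (hU : IsOpen U) (hφ : ∀ x ∈ U, HasDerivAt φ (p - q * φ x ^ 2) x) :
    Set.EqOn (iteratedDeriv 2 φ) (fun x => -2 * q * φ x * (p - q * φ x ^ 2)) U := by
  intro x hx
  rw [iteratedDeriv_succ, iteratedDeriv_one,
    ((deriv_eqOn hφ).eventuallyEq_of_mem (hU.mem_nhds hx)).deriv_eq]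
  refine ((((hφ x hx).fun_pow 2).const_mul q).const_sub p).deriv.trans ?_
  ring

theorem iteratedDeriv_three_eqOn (hU : IsOpen U)
    (hφ : ∀ x ∈ U, HasDerivAt φ (p - q * φ x ^ 2) x) :
    Set.EqOn (iteratedDeriv 3 φ)
      (fun x => -2 * q * (p - q * φ x ^ 2) ^ 2 + 4 * q ^ 2 * φ x ^ 2 * (p - q * φ x ^ 2)) U := by
  intro x hx
  rw [iteratedDeriv_succ,
    ((iteratedDeriv_two_eqOn hU hφ).eventuallyEq_of_mem (hU.mem_nhds hx)).deriv_eq]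
  have hφ' := hφ x hx
  refine ((hφ'.const_mul (-2 * q)).mul (((hφ'.fun_pow 2).const_mul q).const_sub p)).deriv.trans ?_
  ring

end Riccati

theorem extremalOp_eq_zero_of_riccati {ε : ℝ} {φ : ℝ → ℝ} {U : Set ℝ} (hU : IsOpen U)
    (hφ : ∀ x ∈ U, HasDerivAt φ (ε - 2 / 9 * φ x ^ 2) x) {x : ℝ} (hx : x ∈ U) :
    extremalOp ε φ x = 0 := by
  rw [extremalOp, Riccati.iteratedDeriv_three_eqOn hU hφ hx,
    Riccati.iteratedDeriv_two_eqOn hU hφ hx, Riccati.deriv_eqOn hφ hx]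
  ring

theorem HasDerivAt.riccati_comp_mul {y : ℝ → ℝ} {a c q x : ℝ}
    (hy : HasDerivAt y (1 - y (c * x) ^ 2) (c * x)) (hc : c = q * a) :
    HasDerivAt (fun s => a * y (c * s)) (a * c - q * (a * y (c * x)) ^ 2) x := by
  have hlin : HasDerivAt (fun s => c * s) c x := by simpa using (hasDerivAt_id x).const_mul c
  refine ((hy.comp x hlin).const_mul a).congr_deriv ?_
  rw [hc]
  ring

theorem Real.hasDerivAt_tanh (x : ℝ) : HasDerivAt Real.tanh (1 - Real.tanh x ^ 2) x := by
  have htanh : Real.tanh = fun t => Real.sinh t / Real.cosh t :=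
    funext fun t => Real.tanh_eq_sinh_div_cosh t
  have hC : Real.cosh x ≠ 0 := (Real.cosh_pos x).ne'
  rw [htanh]
  refine ((Real.hasDerivAt_sinh x).div (Real.hasDerivAt_cosh x) hC).congr_deriv ?_
  field_simp

theorem Real.hasDerivAt_coth {x : ℝ} (hx : x ≠ 0) :
    HasDerivAt (fun t => Real.cosh t / Real.sinh t) (1 - (Real.cosh x / Real.sinh x) ^ 2) x := by
  have hS : Real.sinh x ≠ 0 := Real.sinh_ne_zero.2 hx
  refine ((Real.hasDerivAt_cosh x).div (Real.hasDerivAt_sinh x) hS).congr_deriv ?_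
  field_simp

/-- The curves with fully affine curvature `(3√2/2)·tanh((√2/3)ξ)` and
`(3√2/2)·coth((√2/3)ξ)` are fully affine extremal (case `ε = 1`). -/
theorem tanh_coth_extremal :
    (∀ ξ : ℝ,
      extremalOp 1 (fun s => 3 * Real.sqrt 2 / 2 * Real.tanh (Real.sqrt 2 / 3 * s)) ξ = 0) ∧
    (∀ ξ : ℝ, ξ ≠ 0 →
      extremalOp 1 (fun s => 3 * Real.sqrt 2 / 2 *
        (Real.cosh (Real.sqrt 2 / 3 * s) / Real.sinh (Real.sqrt 2 / 3 * s))) ξ = 0) := by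
  have hac : 3 * Real.sqrt 2 / 2 * (Real.sqrt 2 / 3) = 1 := by
    linear_combination Real.sq_sqrt (zero_le_two : (0 : ℝ) ≤ 2) / 2
  have hc : Real.sqrt 2 / 3 = 2 / 9 * (3 * Real.sqrt 2 / 2) := by ring
  constructor
  · intro ξ
    refine extremalOp_eq_zero_of_riccati isOpen_univ (fun x _ => ?_) (Set.mem_univ ξ)
    simpa only [hac] using (Real.hasDerivAt_tanh _).riccati_comp_mul hc
  · intro ξ hξ
    refine extremalOp_eq_zero_of_riccati isOpen_ne (fun x hx => ?_) hξ
    have hcx : Real.sqrt 2 / 3 * x ≠ 0 := mul_ne_zero (by positivity) hx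
    simpa only [hac] using (Real.hasDerivAt_coth hcx).riccati_comp_mul hc
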